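/- Let X be the formal power series in ℤ⟦t⟧ whose coefficient of tⁿ is the sum of area(w) over all Dyck paths w of length n. Then t² − (4t² − 1)(2t² − 1)·X + t²·(4t² − 1)²·X² = 0 in ℤ⟦t⟧. -/

import Mathlib

/-!
A nonempty Dyck path decomposes uniquely at its first return to height 0 as `U u D v` with `u`, `v`
Dyck paths, and its area is `|u| + 1 + area u + area v`. For the counting series `C` this gives
`C = 1 + t²C²`, and for the area series `A = t²((tC)'C + 2AC)`. Differentiating the equation for
`C` yields `(tC)'(1 - 2t²C) = C`, while `(1 - 2t²C)² = 1 - 4t²`; together `(1 - 4t²)A = C - 1`,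
and substituting this into `C = 1 + t²C²` is the claimed quadratic equation for `A`.
-/

open Finset

/-- Height after `i` steps of the walk `s`, starting at height `a`. -/
def height {n : ℕ} (a : ℤ) (s : Fin n → ℤ) (i : ℕ) : ℤ :=
  a + ∑ j ∈ Finset.univ.filter (fun j : Fin n => (j : ℕ) < i), s j

/-- The area under a path: the sum of its intermediate heights h_1 + ⋯ + h_{n−1}. -/
def area {n : ℕ} (s : Fin n → ℤ) : ℤ :=
  ∑ i ∈ Finset.Ico 1 n, height 0 s i

open scoped Classical in
/-- Dyck paths of length `n`. -/
noncomputable def dyckPaths (n : ℕ) : Finset (Fin n → ℤ) :=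
  (Fintype.piFinset fun _ => ({1, -1} : Finset ℤ)).filter
    (fun s => (∀ i ∈ Finset.Icc 1 n, 0 ≤ height 0 s i) ∧ height 0 s n = 0)

/-- The generating function whose coefficient of tⁿ is the sum of the areas of
all Dyck paths of length n. -/
noncomputable def A : PowerSeries ℤ :=
  PowerSeries.mk fun n => ∑ w ∈ dyckPaths n, area w

@[simp]
lemma height_zero {n : ℕ} (a : ℤ) (s : Fin n → ℤ) : height a s 0 = a := by
  simp [height]

lemma height_succ {n : ℕ} (a : ℤ) (s : Fin n → ℤ) {i : ℕ} (hi : i < n) :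
    height a s (i + 1) = height a s i + s ⟨i, hi⟩ := by
  have : univ.filter (fun j : Fin n => (j : ℕ) < i + 1)
      = insert ⟨i, hi⟩ (univ.filter fun j : Fin n => (j : ℕ) < i) := by
    ext j
    simp [Fin.ext_iff, le_iff_eq_or_lt]
  rw [height, height, this, sum_insert (by simp)]
  ring

lemma height_one {n : ℕ} (a : ℤ) (s : Fin (n + 1) → ℤ) : height a s 1 = a + s 0 := by
  simpa using height_succ a s (Nat.succ_pos n) (i := 0)

lemma area_eq_sum_range {n : ℕ} (s : Fin n → ℤ) :
    area s = ∑ i ∈ range n, height 0 s i := by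
  rcases n with _ | n
  · simp [area]
  · rw [range_eq_Ico, sum_eq_sum_Ico_succ_bot n.succ_pos, height_zero, zero_add, area]

lemma mem_dyckPaths {n : ℕ} {s : Fin n → ℤ} :
    s ∈ dyckPaths n ↔
      (∀ j, s j = 1 ∨ s j = -1) ∧ (∀ i ≤ n, 0 ≤ height 0 s i) ∧ height 0 s n = 0 := by
  classical
  simp only [dyckPaths, mem_filter, Fintype.mem_piFinset, mem_insert, mem_singleton, mem_Icc]
  refine and_congr_right fun _ => and_congr_left fun _ =>
    ⟨fun h i hi => ?_, fun h i hi => h i hi.2⟩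
  rcases i with _ | i
  · simp
  · exact h _ ⟨i.succ_pos, hi⟩

lemma dyckPaths_zero : dyckPaths 0 = {0} := by
  ext s
  simp [mem_dyckPaths, Subsingleton.elim s 0]

lemma dyckPaths_one : dyckPaths 1 = ∅ := by
  ext s
  simp only [mem_dyckPaths, notMem_empty, iff_false, not_and]
  intro hs _
  rcases hs 0 with h | h <;> simp [height_one, h]

section NestAppend

variable {k l : ℕ}

/-- The Dyck word `U u D v`. -/
def nestAppend (u : Fin k → ℤ) (v : Fin l → ℤ) (i : Fin (k + l + 2)) : ℤ :=
  if h0 : (i : ℕ) = 0 then 1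
  else if hk : (i : ℕ) ≤ k then u ⟨i - 1, by omega⟩
  else if hk1 : (i : ℕ) = k + 1 then -1
  else v ⟨i - (k + 2), by have := i.2; omega⟩

variable (u : Fin k → ℤ) (v : Fin l → ℤ)

lemma nestAppend_zero : nestAppend u v 0 = 1 := rfl

lemma nestAppend_succ {j : ℕ} (hj : j < k) :
    nestAppend u v ⟨j + 1, by omega⟩ = u ⟨j, hj⟩ := by
  simp [nestAppend, Nat.succ_le_of_lt hj]

lemma nestAppend_mid : nestAppend u v ⟨k + 1, by omega⟩ = -1 := by
  simp [nestAppend]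

lemma nestAppend_add {j : ℕ} (hj : j < l) :
    nestAppend u v ⟨k + 2 + j, by omega⟩ = v ⟨j, hj⟩ := by
  simp [nestAppend, show ¬ k + 2 + j ≤ k by omega, show k + 2 + j ≠ k + 1 by omega]

lemma height_nestAppend_succ {i : ℕ} (hi : i ≤ k) :
    height 0 (nestAppend u v) (i + 1) = 1 + height 0 u i := by
  induction i with
  | zero => simp [height_one, nestAppend_zero]
  | succ i ih =>
    rw [height_succ _ _ (by omega), ih (by omega), height_succ _ _ (by omega),
      nestAppend_succ u v (by omega), add_assoc]

lemma height_nestAppend_add {j : ℕ} (hj : j ≤ l) :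
    height 0 (nestAppend u v) (k + 2 + j) = height 0 u k + height 0 v j := by
  induction j with
  | zero =>
    rw [add_zero, height_succ _ _ (by omega), height_nestAppend_succ u v le_rfl,
      nestAppend_mid, height_zero]
    ring
  | succ j ih =>
    rw [← add_assoc, height_succ _ _ (by omega), ih (by omega), height_succ _ _ (by omega),
      nestAppend_add u v (by omega), add_assoc]

lemma nestAppend_mem_dyckPaths {u : Fin k → ℤ} {v : Fin l → ℤ}
    (hu : u ∈ dyckPaths k) (hv : v ∈ dyckPaths l) :
    nestAppend u v ∈ dyckPaths (k + l + 2) := by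
  obtain ⟨hu_step, hu_nonneg, hu_end⟩ := mem_dyckPaths.mp hu
  obtain ⟨hv_step, hv_nonneg, hv_end⟩ := mem_dyckPaths.mp hv
  refine mem_dyckPaths.mpr ⟨fun j => ?_, fun i hi => ?_, ?_⟩
  · unfold nestAppend
    split_ifs <;> simp [hu_step, hv_step]
  · rcases i with _ | i
    · simp
    rcases le_or_gt i k with hik | hik
    · rw [height_nestAppend_succ u v hik]
      linarith [hu_nonneg i hik]
    · obtain ⟨j, hj⟩ : ∃ j, i + 1 = k + 2 + j := ⟨i - k - 1, by omega⟩
      rw [hj, height_nestAppend_add u v (by omega), hu_end, zero_add]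
      exact hv_nonneg j (by omega)
  · have h := height_nestAppend_add u v (le_refl l)
    rwa [hu_end, hv_end, zero_add, show k + 2 + l = k + l + 2 by ring] at h

lemma area_nestAppend {u : Fin k → ℤ} (hu : height 0 u k = 0) (v : Fin l → ℤ) :
    area (nestAppend u v) = k + 1 + area u + area v := by
  have inside : ∑ i ∈ range (k + 1), height 0 (nestAppend u v) (i + 1) = k + 1 + area u := by
    rw [sum_congr rfl fun i hi => height_nestAppend_succ u v (Nat.lt_succ_iff.mp
        (mem_range.mp hi)), sum_add_distrib, sum_range_succ (height 0 u), hu, ← area_eq_sum_range]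
    simp
  have outside : ∑ j ∈ range l, height 0 (nestAppend u v) (k + 2 + j) = area v := by
    rw [sum_congr rfl fun j hj => height_nestAppend_add u v (mem_range.mp hj).le, hu,
      area_eq_sum_range]
    simp
  rw [area_eq_sum_range, show range (k + l + 2) = range (k + 1 + 1 + l) by ring_nf,
    sum_range_add, sum_range_succ', inside, outside, height_zero, add_zero]

end NestAppend

section FirstReturn

noncomputable def firstReturn {n : ℕ} (w : Fin n → ℤ) : ℕ :=
  sInf {i | 0 < i ∧ height 0 w i = 0}

lemma firstReturn_eq {n r : ℕ} {w : Fin n → ℤ} (hr : 0 < r) (hw : height 0 w r = 0)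
    (hpos : ∀ i, 0 < i → i < r → height 0 w i ≠ 0) : firstReturn w = r :=
  le_antisymm (Nat.sInf_le ⟨hr, hw⟩) <|
    le_csInf ⟨r, hr, hw⟩ fun _ ⟨hi, hwi⟩ => not_lt.mp fun hir => hpos _ hi hir hwi

variable {n : ℕ} {w : Fin n → ℤ}

lemma firstReturn_spec (hn : 0 < n) (hw : w ∈ dyckPaths n) :
    0 < firstReturn w ∧ firstReturn w ≤ n ∧ height 0 w (firstReturn w) = 0 ∧
      ∀ i, 0 < i → i < firstReturn w → 0 < height 0 w i := by
  obtain ⟨-, hnonneg, hend⟩ := mem_dyckPaths.mp hw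
  have hmem : n ∈ {i | 0 < i ∧ height 0 w i = 0} := ⟨hn, hend⟩
  refine ⟨(Nat.sInf_mem ⟨n, hmem⟩).1, Nat.sInf_le hmem, (Nat.sInf_mem ⟨n, hmem⟩).2,
    fun i hi hir => (hnonneg i (hir.le.trans (Nat.sInf_le hmem))).lt_of_ne' fun h => ?_⟩
  exact Nat.notMem_of_lt_sInf hir ⟨hi, h⟩

lemma apply_zero_eq_one_of_mem_dyckPaths {w : Fin (n + 1) → ℤ} (hw : w ∈ dyckPaths (n + 1)) :
    w 0 = 1 := by
  obtain ⟨hstep, hnonneg, -⟩ := mem_dyckPaths.mp hw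
  have := hnonneg 1 (by omega)
  rw [height_one] at this
  rcases hstep 0 with h | h <;> simp_all

lemma two_le_firstReturn {w : Fin (n + 1) → ℤ} (hw : w ∈ dyckPaths (n + 1)) :
    2 ≤ firstReturn w := by
  obtain ⟨hpos, -, hret, -⟩ := firstReturn_spec n.succ_pos hw
  by_contra! h
  obtain hr : firstReturn w = 1 := by omega
  rw [hr] at hret
  simp [height_one, apply_zero_eq_one_of_mem_dyckPaths hw] at hret

end FirstReturn

section Split

variable {k l : ℕ}

def insidePart (w : Fin (k + l + 2) → ℤ) : Fin k → ℤ :=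
  fun j => w ⟨j + 1, by omega⟩

def outsidePart (w : Fin (k + l + 2) → ℤ) : Fin l → ℤ :=
  fun j => w ⟨k + 2 + j, by omega⟩

lemma insidePart_nestAppend (u : Fin k → ℤ) (v : Fin l → ℤ) :
    insidePart (nestAppend u v) = u :=
  funext fun j => nestAppend_succ u v j.2

lemma outsidePart_nestAppend (u : Fin k → ℤ) (v : Fin l → ℤ) :
    outsidePart (k := k) (nestAppend u v) = v :=
  funext fun j => nestAppend_add u v j.2

lemma nestAppend_insidePart_outsidePart {w : Fin (k + l + 2) → ℤ} (h0 : w 0 = 1)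
    (hk : w ⟨k + 1, by omega⟩ = -1) : nestAppend (insidePart w) (outsidePart w) = w := by
  funext ⟨i, hi⟩
  by_cases hi0 : i = 0
  · subst hi0; exact h0.symm
  by_cases hik : i ≤ k
  · simp [nestAppend, hi0, hik, insidePart, Nat.sub_add_cancel (Nat.pos_of_ne_zero hi0)]
  by_cases hik1 : i = k + 1
  · subst hik1; simp [nestAppend, hk]
  · simp [nestAppend, hi0, hik, hik1, outsidePart, Nat.add_sub_cancel' (by omega : k + 2 ≤ i)]

variable (w : Fin (k + l + 2) → ℤ)

lemma height_insidePart {i : ℕ} (hi : i ≤ k) :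
    height 0 (insidePart w) i = height 0 w (i + 1) - w 0 := by
  induction i with
  | zero => simp [height_one]
  | succ i ih =>
    rw [height_succ _ _ (by omega), ih (by omega), height_succ 0 w (i := i + 1) (by omega)]
    simp only [insidePart]
    ring

lemma height_outsidePart {j : ℕ} (hj : j ≤ l) :
    height 0 (outsidePart w) j = height 0 w (k + 2 + j) - height 0 w (k + 2) := by
  induction j with
  | zero => simp
  | succ j ih =>
    rw [height_succ _ _ (by omega), ih (by omega), ← add_assoc,
      height_succ 0 w (i := k + 2 + j) (by omega)]
    simp only [outsidePart]
    ring

variable {w} (hw : w ∈ dyckPaths (k + l + 2)) (hret : firstReturn w = k + 2)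
include hw hret

lemma height_and_step_before_firstReturn :
    height 0 w (k + 1) = 1 ∧ w ⟨k + 1, by omega⟩ = -1 := by
  obtain ⟨-, -, hzero, hpos⟩ := firstReturn_spec (by omega) hw
  rw [hret, height_succ _ _ (by omega)] at hzero
  have := hpos (k + 1) (by omega) (by omega)
  rcases (mem_dyckPaths.mp hw).1 ⟨k + 1, by omega⟩ with h | h <;> rw [h] at hzero ⊢ <;> omega

lemma insidePart_mem_dyckPaths : insidePart w ∈ dyckPaths k := by
  obtain ⟨-, -, -, hpos⟩ := firstReturn_spec (by omega) hw
  have h0 : w 0 = 1 := apply_zero_eq_one_of_mem_dyckPaths hw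
  refine mem_dyckPaths.mpr ⟨fun j => (mem_dyckPaths.mp hw).1 _, fun i hi => ?_, ?_⟩
  · rw [height_insidePart w hi, h0, sub_nonneg]
    exact hpos (i + 1) (by omega) (by omega)
  · rw [height_insidePart w le_rfl, h0, (height_and_step_before_firstReturn hw hret).1,
      sub_self]

lemma outsidePart_mem_dyckPaths : outsidePart w ∈ dyckPaths l := by
  obtain ⟨hstep, hnonneg, hend⟩ := mem_dyckPaths.mp hw
  obtain ⟨-, -, hzero, -⟩ := firstReturn_spec (by omega) hw
  rw [hret] at hzero
  refine mem_dyckPaths.mpr ⟨fun j => hstep _, fun j hj => ?_, ?_⟩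
  · rw [height_outsidePart w hj, hzero, sub_zero]
    exact hnonneg _ (by omega)
  · rw [height_outsidePart w le_rfl, hzero, sub_zero, show k + 2 + l = k + l + 2 by ring, hend]

lemma nestAppend_insidePart_outsidePart_of_firstReturn :
    nestAppend (insidePart w) (outsidePart w) = w :=
  nestAppend_insidePart_outsidePart (apply_zero_eq_one_of_mem_dyckPaths hw)
    (height_and_step_before_firstReturn hw hret).2

end Split

lemma firstReturn_nestAppend {k l : ℕ} {u : Fin k → ℤ} (hu : u ∈ dyckPaths k)
    (v : Fin l → ℤ) : firstReturn (nestAppend u v) = k + 2 := by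
  obtain ⟨-, hnonneg, hend⟩ := mem_dyckPaths.mp hu
  refine firstReturn_eq (by omega) ?_ fun i hi hik => ?_
  · simpa [hend] using height_nestAppend_add u v (Nat.zero_le l)
  · obtain ⟨i, rfl⟩ := Nat.exists_eq_add_one_of_ne_zero hi.ne'
    rw [height_nestAppend_succ u v (by omega)]
    linarith [hnonneg i (by omega)]

section Decomposition

variable {M : Type*} [AddCommMonoid M]

lemma sum_dyckPaths_filter_firstReturn {k l : ℕ} (F : (Fin (k + l + 2) → ℤ) → M) :
    ∑ w ∈ (dyckPaths (k + l + 2)).filter (fun w => firstReturn w = k + 2), F w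
      = ∑ u ∈ dyckPaths k, ∑ v ∈ dyckPaths l, F (nestAppend u v) := by
  rw [← sum_product']
  refine sum_nbij' (fun w => (insidePart w, outsidePart w)) (fun p => nestAppend p.1 p.2)
    ?_ ?_ ?_ ?_ ?_
  · intro w hw
    obtain ⟨hw, hret⟩ := mem_filter.mp hw
    exact mem_product.mpr ⟨insidePart_mem_dyckPaths hw hret, outsidePart_mem_dyckPaths hw hret⟩
  · intro p hp
    obtain ⟨hu, hv⟩ := mem_product.mp hp
    exact mem_filter.mpr ⟨nestAppend_mem_dyckPaths hu hv, firstReturn_nestAppend hu p.2⟩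
  · intro w hw
    obtain ⟨hw, hret⟩ := mem_filter.mp hw
    exact nestAppend_insidePart_outsidePart_of_firstReturn hw hret
  · intro p _
    simp [insidePart_nestAppend, outsidePart_nestAppend]
  · intro w hw
    obtain ⟨hw, hret⟩ := mem_filter.mp hw
    rw [nestAppend_insidePart_outsidePart_of_firstReturn hw hret]

lemma sum_dyckPaths_add_two (m : ℕ) (F : ∀ {n : ℕ}, (Fin n → ℤ) → M) :
    ∑ w ∈ dyckPaths (m + 2), F w = ∑ p ∈ antidiagonal m,
      ∑ u ∈ dyckPaths p.1, ∑ v ∈ dyckPaths p.2, F (nestAppend u v) := by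
  have bounds : ∀ w ∈ dyckPaths (m + 2), 2 ≤ firstReturn w ∧ firstReturn w ≤ m + 2 :=
    fun w hw => ⟨two_le_firstReturn hw, (firstReturn_spec (by omega) hw).2.1⟩
  rw [← sum_fiberwise_of_maps_to (t := antidiagonal m)
    (g := fun w => (firstReturn w - 2, m + 2 - firstReturn w))
    fun w hw => Finset.HasAntidiagonal.mem_antidiagonal.mpr (by have := bounds w hw; omega)]
  refine sum_congr rfl fun ⟨k, l⟩ hkl => ?_
  obtain rfl : k + l = m := Finset.HasAntidiagonal.mem_antidiagonal.mp hkl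
  rw [← sum_dyckPaths_filter_firstReturn]
  refine sum_congr (filter_congr fun w hw => ?_) fun _ _ => rfl
  have := bounds w hw
  simp only [Prod.mk.injEq]
  omega

end Decomposition

open PowerSeries

lemma PowerSeries.eq_C_add_X_sq_mul_of_coeff {R : Type*} [Semiring R] {f g : R⟦X⟧} {c : R}
    (h0 : coeff 0 f = c) (h1 : coeff 1 f = 0) (h : ∀ m, coeff (m + 2) f = coeff m g) :
    f = C c + X ^ 2 * g := by
  ext (_ | _ | m) <;> simp [coeff_X_pow_mul', *]

lemma PowerSeries.coeff_derivative_X_mul {R : Type*} [CommSemiring R] (f : R⟦X⟧) (n : ℕ) :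
    coeff n (d⁄dX R (X * f)) = coeff n f * (n + 1) := by
  rw [coeff_derivative, coeff_succ_X_mul]

lemma card_dyckPaths_add_two (m : ℕ) :
    ((dyckPaths (m + 2)).card : ℤ)
      = ∑ p ∈ antidiagonal m, ((dyckPaths p.1).card : ℤ) * (dyckPaths p.2).card := by
  simpa using sum_dyckPaths_add_two m fun _ => (1 : ℤ)

lemma sum_area_dyckPaths_add_two (m : ℕ) :
    ∑ w ∈ dyckPaths (m + 2), area w = ∑ p ∈ antidiagonal m,
      (((p.1 : ℤ) + 1) * (dyckPaths p.1).card * (dyckPaths p.2).card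
        + (∑ u ∈ dyckPaths p.1, area u) * (dyckPaths p.2).card
        + (dyckPaths p.1).card * ∑ v ∈ dyckPaths p.2, area v) := by
  rw [sum_dyckPaths_add_two m area]
  refine sum_congr rfl fun p _ => ?_
  rw [sum_congr rfl fun u hu => sum_congr rfl fun v _ =>
    area_nestAppend (mem_dyckPaths.mp hu).2.2 v]
  simp only [sum_add_distrib, sum_const, nsmul_eq_mul, ← mul_sum]
  ring

noncomputable def dyckSeries : ℤ⟦X⟧ :=
  mk fun n => ((dyckPaths n).card : ℤ)

lemma dyckSeries_eq : dyckSeries = 1 + X ^ 2 * dyckSeries ^ 2 := by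
  refine (eq_C_add_X_sq_mul_of_coeff ?_ ?_ fun m => ?_).trans (by rw [map_one])
  · simp [dyckSeries, dyckPaths_zero]
  · simp [dyckSeries, dyckPaths_one]
  · simp [dyckSeries, sq, coeff_mul, card_dyckPaths_add_two]

lemma A_eq :
    A = X ^ 2 * (d⁄dX ℤ (X * dyckSeries) * dyckSeries + (A * dyckSeries + dyckSeries * A)) := by
  refine (eq_C_add_X_sq_mul_of_coeff (c := 0) ?_ ?_ fun m => ?_).trans
    (by rw [map_zero, zero_add])
  · simp [A, dyckPaths_zero, area]
  · simp [A, dyckPaths_one]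
  · simp only [A, dyckSeries, coeff_mk, map_add, coeff_mul, ← sum_add_distrib,
      sum_area_dyckPaths_add_two, coeff_derivative_X_mul]
    refine sum_congr rfl fun p _ => ?_
    ring

lemma derivative_X_mul_dyckSeries_mul :
    d⁄dX ℤ (X * dyckSeries) * (1 - 2 * X ^ 2 * dyckSeries) = dyckSeries := by
  have h := congrArg (d⁄dX ℤ) dyckSeries_eq
  simp only [map_add, Derivation.map_one_eq_zero, Derivation.leibniz, Derivation.leibniz_pow,
    derivative_X, smul_eq_mul, nsmul_eq_mul, Nat.cast_ofNat, Nat.add_one_sub_one, pow_one,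
    mul_one, zero_add] at h ⊢
  linear_combination (X : ℤ⟦X⟧) * h

lemma one_sub_two_X_sq_mul_dyckSeries_sq :
    (1 - 2 * X ^ 2 * dyckSeries) ^ 2 = 1 - 4 * X ^ 2 := by
  linear_combination (-4 * X ^ 2 : ℤ⟦X⟧) * dyckSeries_eq

lemma A_mul_one_sub_four_X_sq : A * (1 - 4 * X ^ 2) = dyckSeries - 1 := by
  rw [← one_sub_two_X_sq_mul_dyckSeries_sq]
  linear_combination (1 - 2 * X ^ 2 * dyckSeries) * A_eq
    + X ^ 2 * dyckSeries * derivative_X_mul_dyckSeries_mul - dyckSeries_eq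

/-- t² − (4t² − 1)(2t² − 1)·X + t²·(4t² − 1)²·X² = 0 for the
generating function X of the sums of areas of Dyck paths. -/
theorem stmt18 :
    (PowerSeries.X : PowerSeries ℤ) ^ 2
      - (4 * (PowerSeries.X : PowerSeries ℤ) ^ 2 - 1) *
          (2 * (PowerSeries.X : PowerSeries ℤ) ^ 2 - 1) * A
      + (PowerSeries.X : PowerSeries ℤ) ^ 2 *
          (4 * (PowerSeries.X : PowerSeries ℤ) ^ 2 - 1) ^ 2 * A ^ 2 = 0 := by
  linear_combination (X ^ 2 * dyckSeries + X ^ 2 * (A * (1 - 4 * X ^ 2) + 1) - 1)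
    * A_mul_one_sub_four_X_sq - dyckSeries_eq
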